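/- For every integer n ≥ 0, every real N > 0, every real X and every complex number s with s² = X² - 1, the Gegenbauer polynomial has the moment representation C_n^N(X) = (1/n!) · ∫_0^∞ ∫_0^∞ ((X+s)u + (X-s)v)^n · γ_N(u) γ_N(v) du dv. -/
import Mathlib


open Finset Polynomial MeasureTheory

/-- The Gegenbauer polynomial `C_n^N(X)` (real parameter and argument). -/
noncomputable def Geg (n : ℕ) (N X : ℝ) : ℝ :=
  ∑ k ∈ Finset.range (n / 2 + 1),
    (-1) ^ k * ((ascPochhammer ℝ (n - k)).eval N /
      (((n - 2 * k).factorial : ℝ) * (k.factorial : ℝ))) * (2 * X) ^ (n - 2 * k)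

/-- The Gamma density with shape parameter `a`, `γ_a(b) = e^(-b) b^(a-1) / Γ(a)` on `(0,∞)`. -/
noncomputable def gammaPdf (a b : ℝ) : ℝ :=
  Real.exp (-b) * b ^ (a - 1) / Real.Gamma a

/-! ### Auxiliary algebraic lemmas -/

lemma asc_vandermonde {R : Type*} [CommRing R] (x y : R) (k : ℕ) :
    (ascPochhammer R k).eval (x + y) =
      ∑ j ∈ range (k+1), (k.choose j : R) *
        ((ascPochhammer R j).eval x * (ascPochhammer R (k-j)).eval y) := by
  induction k with
  | zero => simp
  | succ k ih =>
    rw [ascPochhammer_succ_eval, ih, Finset.sum_mul,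
      Finset.sum_choose_succ_mul
        (fun i j => (ascPochhammer R i).eval x * (ascPochhammer R j).eval y) k,
      ← Finset.sum_add_distrib]
    refine Finset.sum_congr rfl fun j hj => ?_
    have hj' : j ≤ k := by simpa [Nat.lt_succ_iff] using hj
    have h1 : k + 1 - j = (k - j) + 1 := by omega
    rw [h1, ascPochhammer_succ_eval, ascPochhammer_succ_eval]
    simp only [Nat.cast_sub hj']
    ring

lemma asc_ofReal (k : ℕ) (r : ℝ) :
    (((ascPochhammer ℝ k).eval r : ℝ) : ℂ) = (ascPochhammer ℂ k).eval (r : ℂ) := by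
  induction k with
  | zero => simp
  | succ k ih => push_cast [ascPochhammer_succ_eval, ih]; ring

lemma asc_add_eval {S : Type*} [CommSemiring S] (m l : ℕ) (z : S) :
    (ascPochhammer S (m + l)).eval z =
      (ascPochhammer S m).eval z * (ascPochhammer S l).eval (z + m) := by
  rw [← ascPochhammer_mul, eval_mul, eval_comp]
  simp

lemma coeff_id (n k j : ℕ) (hk : k ≤ n) (hjk : j ≤ k) (hjnk : j ≤ n - k) :
    (n.factorial : ℂ) / (((n - 2*j).factorial : ℂ) * (j.factorial : ℂ))
        * ((n - 2*j).choose (k - j) : ℂ)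
      = (n.choose k : ℂ) * (k.choose j : ℂ) * ((n - k).descFactorial j : ℂ) := by
  have h1 : k - j ≤ n - 2*j := by omega
  have h2 : n - 2*j - (k - j) = n - k - j := by omega
  have hdesc : ((n - k).descFactorial j : ℂ)
      = ((n-k).factorial : ℂ) / ((n - k - j).factorial : ℂ) := by
    rw [eq_div_iff (by exact_mod_cast (n-k-j).factorial_ne_zero)]
    rw [← Nat.cast_mul, mul_comm, Nat.factorial_mul_descFactorial hjnk]
  rw [Nat.cast_choose ℂ h1, Nat.cast_choose ℂ hk, Nat.cast_choose ℂ hjk, hdesc, h2]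
  have f0 : ∀ m : ℕ, ((m.factorial : ℂ)) ≠ 0 := fun m => by
    exact_mod_cast m.factorial_ne_zero
  have a1 := f0 (n - 2*j); have a2 := f0 j; have a3 := f0 (k - j)
  have a4 := f0 (n - k - j); have a5 := f0 k; have a6 := f0 (n - k); have a7 := f0 n
  field_simp

lemma star_id (z : ℂ) (n k : ℕ) (hk : k ≤ n) :
    ∑ j ∈ range (min k (n-k) + 1),
      (-1:ℂ)^j * ((n.factorial : ℂ) / (((n-2*j).factorial : ℂ) * (j.factorial : ℂ)))
        * (ascPochhammer ℂ (n-j)).eval z * ((n-2*j).choose (k-j) : ℂ)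
    = (n.choose k : ℂ) * ((ascPochhammer ℂ k).eval z * (ascPochhammer ℂ (n-k)).eval z) := by
  have hterm : ∀ j ∈ range (min k (n-k) + 1),
      (-1:ℂ)^j * ((n.factorial : ℂ) / (((n-2*j).factorial : ℂ) * (j.factorial : ℂ)))
        * (ascPochhammer ℂ (n-j)).eval z * ((n-2*j).choose (k-j) : ℂ)
      = (n.choose k : ℂ) * (ascPochhammer ℂ (n-k)).eval z *
          ((k.choose j : ℂ) * ((ascPochhammer ℂ j).eval (-((n-k : ℕ) : ℂ)) *
            (ascPochhammer ℂ (k-j)).eval (((n-k : ℕ) : ℂ) + z))) := by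
    intro j hj
    rw [mem_range, Nat.lt_succ_iff, le_min_iff] at hj
    obtain ⟨hjk, hjnk⟩ := hj
    have hnj : n - j = (n-k) + (k-j) := by omega
    rw [hnj, asc_add_eval, ascPochhammer_eval_neg_eq_descPochhammer,
      descPochhammer_eval_eq_descFactorial]
    have := coeff_id n k j hk hjk hjnk
    rw [mul_comm ((-1:ℂ)^j), mul_assoc, mul_assoc, ← mul_assoc _ _ (((n - 2*j).choose (k-j) : ℂ)),
      mul_comm _ (((n - 2*j).choose (k-j) : ℂ)), ← mul_assoc, this]
    rw [add_comm ((↑(n-k) : ℂ)) z]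
    ring
  rw [Finset.sum_congr rfl hterm, ← Finset.mul_sum]
  have hext : ∑ j ∈ range (min k (n-k) + 1),
      ((k.choose j : ℂ) * ((ascPochhammer ℂ j).eval (-((n-k : ℕ) : ℂ)) *
        (ascPochhammer ℂ (k-j)).eval (((n-k : ℕ) : ℂ) + z)))
      = ∑ j ∈ range (k + 1),
      ((k.choose j : ℂ) * ((ascPochhammer ℂ j).eval (-((n-k : ℕ) : ℂ)) *
        (ascPochhammer ℂ (k-j)).eval (((n-k : ℕ) : ℂ) + z))) := by
    refine Finset.sum_subset ?_ ?_
    · intro x hx; rw [mem_range] at *; omega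
    · intro x hx hx'
      rw [mem_range, Nat.lt_succ_iff] at hx hx'
      have : n - k < x := by omega
      rw [ascPochhammer_eval_neg_coe_nat_of_lt this]
      ring
  rw [hext, ← asc_vandermonde]
  rw [show -((n-k : ℕ) : ℂ) + (((n-k : ℕ) : ℂ) + z) = z by ring]
  ring

lemma keysum (a b z : ℂ) (hab : a * b = 1) (n : ℕ) :
    ∑ k ∈ range (n+1), (n.choose k : ℂ) *
        ((ascPochhammer ℂ k).eval z * (ascPochhammer ℂ (n-k)).eval z) * (a^k * b^(n-k))
    = ∑ j ∈ range (n/2 + 1), (-1:ℂ)^j *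
        ((ascPochhammer ℂ (n-j)).eval z *
          ((n.factorial:ℂ) / (((n-2*j).factorial:ℂ) * (j.factorial:ℂ)))) * (a+b)^(n-2*j) := by
  have hpow : ∀ j m : ℕ, j ≤ n/2 → m ≤ n - 2*j →
      a ^ m * b ^ (n - 2*j - m) = a ^ (m+j) * b ^ (n - (m+j)) := by
    intro j m hj hm
    have h2 : n - (m+j) = (n - 2*j - m) + j := by omega
    rw [h2, pow_add, pow_add]
    calc a ^ m * b ^ (n - 2*j - m) = a ^ m * b ^ (n - 2*j - m) * (a*b)^j := by
          rw [hab]; ring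
      _ = a ^ m * a ^ j * (b ^ (n - 2*j - m) * b ^ j) := by rw [mul_pow]; ring
  set T : ℕ → ℕ → ℂ := fun j k => (-1:ℂ)^j *
        ((ascPochhammer ℂ (n-j)).eval z *
          ((n.factorial:ℂ) / (((n-2*j).factorial:ℂ) * (j.factorial:ℂ)))) *
        ((n-2*j).choose (k-j) : ℂ) * (a ^ k * b ^ (n - k)) with hT
  have hrhs : ∑ j ∈ range (n/2 + 1), (-1:ℂ)^j *
        ((ascPochhammer ℂ (n-j)).eval z *
          ((n.factorial:ℂ) / (((n-2*j).factorial:ℂ) * (j.factorial:ℂ)))) * (a+b)^(n-2*j)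
      = ∑ j ∈ range (n/2 + 1), ∑ m ∈ range (n - 2*j + 1), T j (m + j) := by
    refine Finset.sum_congr rfl fun j hj => ?_
    rw [mem_range, Nat.lt_succ_iff] at hj
    rw [add_pow, Finset.mul_sum]
    refine Finset.sum_congr rfl fun m hm => ?_
    rw [mem_range, Nat.lt_succ_iff] at hm
    rw [hT]
    simp only []
    rw [← hpow j m hj hm]
    have : m + j - j = m := by omega
    rw [this]
    ring
  have hlhs : ∑ k ∈ range (n+1), (n.choose k : ℂ) *
        ((ascPochhammer ℂ k).eval z * (ascPochhammer ℂ (n-k)).eval z) * (a^k * b^(n-k))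
      = ∑ k ∈ range (n+1), ∑ j ∈ range (min k (n-k) + 1), T j k := by
    refine Finset.sum_congr rfl fun k hk => ?_
    rw [mem_range, Nat.lt_succ_iff] at hk
    rw [hT]
    simp only []
    have hre : ∑ i ∈ range (min k (n-k) + 1), (-1:ℂ)^i *
        ((ascPochhammer ℂ (n-i)).eval z *
          ((n.factorial:ℂ) / (((n-2*i).factorial:ℂ) * (i.factorial:ℂ)))) *
        ((n-2*i).choose (k-i) : ℂ)
        = ∑ i ∈ range (min k (n-k) + 1),
      (-1:ℂ)^i * ((n.factorial : ℂ) / (((n-2*i).factorial : ℂ) * (i.factorial : ℂ)))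
        * (ascPochhammer ℂ (n-i)).eval z * ((n-2*i).choose (k-i) : ℂ) :=
      Finset.sum_congr rfl fun i _ => by ring
    rw [← Finset.sum_mul, hre, star_id z n k hk]
  rw [hrhs, hlhs]
  rw [Finset.sum_sigma', Finset.sum_sigma']
  refine Finset.sum_nbij' (fun p => ⟨p.2, p.1 - p.2⟩) (fun p => ⟨p.2 + p.1, p.1⟩) ?_ ?_ ?_ ?_ ?_
  · intro p hp
    simp only [Finset.mem_sigma, mem_range] at *
    omega
  · intro p hp
    simp only [Finset.mem_sigma, mem_range] at *
    omega
  · intro p hp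
    simp only [Finset.mem_sigma, mem_range] at hp
    ext <;> simp <;> omega
  · intro p hp
    simp only [Finset.mem_sigma, mem_range] at hp
    ext <;> simp <;> omega
  · intro p hp
    simp only [Finset.mem_sigma, mem_range] at hp
    have : p.1 - p.2 + p.2 = p.1 := by omega
    rw [this]

/-! ### Gamma moment lemmas -/

lemma Gamma_shift {N : ℝ} (hN : 0 < N) (k : ℕ) :
    Real.Gamma (N + k) = (ascPochhammer ℝ k).eval N * Real.Gamma N := by
  induction k with
  | zero => simp
  | succ k ih =>
    have h : N + ((k:ℕ)+1 : ℕ) = (N + k) + 1 := by push_cast; ring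
    have hne : N + (k:ℝ) ≠ 0 := by positivity
    rw [h, Real.Gamma_add_one hne, ih, ascPochhammer_succ_eval]
    ring

lemma gammaPdf_eqOn {N : ℝ} (k : ℕ) {u : ℝ} (hu : u ∈ Set.Ioi (0:ℝ)) :
    u ^ k * gammaPdf N u = (Real.exp (-u) * u ^ (N + k - 1)) / Real.Gamma N := by
  have hu' : (0:ℝ) < u := hu
  unfold gammaPdf
  rw [show N + (k:ℝ) - 1 = (N - 1) + (k:ℝ) by ring, Real.rpow_add hu', Real.rpow_natCast]
  ring

lemma moment_integrable {N : ℝ} (hN : 0 < N) (k : ℕ) :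
    IntegrableOn (fun u : ℝ => u ^ k * gammaPdf N u) (Set.Ioi 0) := by
  have h : IntegrableOn (fun u : ℝ => (Real.exp (-u) * u ^ (N + k - 1)) / Real.Gamma N)
      (Set.Ioi 0) := (Real.GammaIntegral_convergent (by positivity : (0:ℝ) < N + k)).div_const _
  exact h.congr_fun (fun u hu => (gammaPdf_eqOn k hu).symm) measurableSet_Ioi

lemma moment_eq {N : ℝ} (hN : 0 < N) (k : ℕ) :
    ∫ u in Set.Ioi (0:ℝ), u ^ k * gammaPdf N u = (ascPochhammer ℝ k).eval N := by
  rw [setIntegral_congr_fun measurableSet_Ioi (fun u hu => gammaPdf_eqOn k hu)]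
  rw [integral_div, ← Real.Gamma_eq_integral (by positivity : (0:ℝ) < N + k), Gamma_shift hN k]
  rw [mul_div_assoc, div_self (Real.Gamma_pos_of_pos hN).ne', mul_one]

lemma momentC_integrable {N : ℝ} (hN : 0 < N) (k : ℕ) :
    IntegrableOn (fun u : ℝ => (u:ℂ) ^ k * ((gammaPdf N u : ℝ) : ℂ)) (Set.Ioi 0) := by
  have : (fun u : ℝ => (u:ℂ) ^ k * ((gammaPdf N u : ℝ) : ℂ))
      = fun u : ℝ => ((u ^ k * gammaPdf N u : ℝ) : ℂ) := by
    funext u; push_cast; ring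
  rw [this]
  exact (moment_integrable hN k).ofReal

lemma momentC_eq {N : ℝ} (hN : 0 < N) (k : ℕ) :
    ∫ u in Set.Ioi (0:ℝ), (u:ℂ) ^ k * ((gammaPdf N u : ℝ) : ℂ)
      = (((ascPochhammer ℝ k).eval N : ℝ) : ℂ) := by
  have : (fun u : ℝ => (u:ℂ) ^ k * ((gammaPdf N u : ℝ) : ℂ))
      = fun u : ℝ => ((u ^ k * gammaPdf N u : ℝ) : ℂ) := by
    funext u; push_cast; ring
  rw [this, ← moment_eq hN k]
  exact integral_ofReal

/-! ### The main theorem -/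

/-- Moment representation: for any complex square root `s` of `X² - 1`,
`C_n^N(X) = (1/n!) ∫_0^∞ ∫_0^∞ ((X+s)u + (X-s)v)^n γ_N(u) γ_N(v) du dv`. -/
theorem gegenbauer_moment_representation_gamma (n : ℕ) (N : ℝ) (hN : 0 < N) (X : ℝ)
    (s : ℂ) (hs : s ^ 2 = (X : ℂ) ^ 2 - 1) :
    (Geg n N X : ℂ) =
      (1 / (n.factorial : ℂ)) *
        ∫ v in Set.Ioi (0 : ℝ), ∫ u in Set.Ioi (0 : ℝ),
          (((X : ℂ) + s) * (u : ℂ) + ((X : ℂ) - s) * (v : ℂ)) ^ n *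
            ((gammaPdf N u : ℝ) : ℂ) * ((gammaPdf N v : ℝ) : ℂ) := by
  set a : ℂ := (X:ℂ) + s with ha
  set b : ℂ := (X:ℂ) - s with hb
  have hab : a * b = 1 := by
    have h : a * b = (X:ℂ)^2 - s^2 := by rw [ha, hb]; ring
    rw [h, hs]; ring
  have inner_eq : ∀ v : ℝ,
      (∫ u in Set.Ioi (0:ℝ), (a * u + b * v)^n * ((gammaPdf N u : ℝ) : ℂ)
          * ((gammaPdf N v : ℝ) : ℂ))
      = ∑ k ∈ range (n+1), ((n.choose k : ℂ) * a^k * b^(n-k) *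
          (((ascPochhammer ℝ k).eval N : ℝ):ℂ)) *
          ((v:ℂ)^(n-k) * ((gammaPdf N v : ℝ) : ℂ)) := by
    intro v
    have hfun : (fun u : ℝ => (a * u + b * v)^n * ((gammaPdf N u : ℝ) : ℂ)
          * ((gammaPdf N v : ℝ) : ℂ))
        = fun u : ℝ => ∑ k ∈ range (n+1),
            ((n.choose k : ℂ) * a^k * b^(n-k) * ((v:ℂ)^(n-k) * ((gammaPdf N v : ℝ) : ℂ))) *
              ((u:ℂ)^k * ((gammaPdf N u : ℝ) : ℂ)) := by
      funext u
      rw [add_pow, Finset.sum_mul, Finset.sum_mul]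
      refine Finset.sum_congr rfl fun k _ => ?_
      rw [mul_pow, mul_pow]
      ring
    rw [hfun, integral_finset_sum _ (fun k _ => ((momentC_integrable hN k).const_mul _))]
    refine Finset.sum_congr rfl fun k _ => ?_
    rw [integral_const_mul, momentC_eq hN k]
    ring
  have outer_eq :
      (∫ v in Set.Ioi (0:ℝ), ∫ u in Set.Ioi (0:ℝ),
        (a * u + b * v)^n * ((gammaPdf N u : ℝ) : ℂ) * ((gammaPdf N v : ℝ) : ℂ))
      = ∑ k ∈ range (n+1), (n.choose k : ℂ) * a^k * b^(n-k) *
          (((ascPochhammer ℝ k).eval N : ℝ):ℂ) * (((ascPochhammer ℝ (n-k)).eval N : ℝ):ℂ) := by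
    simp only [inner_eq]
    rw [integral_finset_sum _ (fun k _ => ((momentC_integrable hN (n-k)).const_mul _))]
    refine Finset.sum_congr rfl fun k _ => ?_
    rw [integral_const_mul, momentC_eq hN (n-k)]
  rw [outer_eq]
  have halg : ∑ k ∈ range (n+1), (n.choose k : ℂ) * a^k * b^(n-k) *
          (((ascPochhammer ℝ k).eval N : ℝ):ℂ) * (((ascPochhammer ℝ (n-k)).eval N : ℝ):ℂ)
      = (n.factorial : ℂ) * (Geg n N X : ℂ) := by
    have h1 : ∑ k ∈ range (n+1), (n.choose k : ℂ) * a^k * b^(n-k) *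
          (((ascPochhammer ℝ k).eval N : ℝ):ℂ) * (((ascPochhammer ℝ (n-k)).eval N : ℝ):ℂ)
        = ∑ k ∈ range (n+1), (n.choose k : ℂ) *
            ((ascPochhammer ℂ k).eval ((N:ℝ):ℂ) * (ascPochhammer ℂ (n-k)).eval ((N:ℝ):ℂ)) *
            (a^k * b^(n-k)) :=
      Finset.sum_congr rfl fun k _ => by rw [← asc_ofReal, ← asc_ofReal]; ring
    rw [h1, keysum a b _ hab n]
    have hab2 : a + b = (2*X : ℂ) := by rw [ha, hb]; ring
    have hgeg : ((Geg n N X : ℝ) : ℂ) = ∑ j ∈ range (n/2+1),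
        (-1:ℂ)^j * ((((ascPochhammer ℝ (n-j)).eval N : ℝ):ℂ) /
          (((n-2*j).factorial : ℂ) * ((j).factorial : ℂ))) * ((2*X:ℂ))^(n-2*j) := by
      rw [Geg, Complex.ofReal_sum]
      refine Finset.sum_congr rfl fun j _ => ?_
      push_cast
      ring
    rw [hab2, hgeg, Finset.mul_sum]
    refine Finset.sum_congr rfl fun j _ => ?_
    rw [← asc_ofReal]
    ring
  rw [halg]
  have hfac : (n.factorial : ℂ) ≠ 0 := by exact_mod_cast n.factorial_ne_zero
  field_simp
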